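/- arXiv:2506.06041 — 4 statements merged into one kernel-verified Lean document; each statement's English description precedes it below -/
import Mathlib

section
/- For every corner tree T with vertices V(T) = {v_1, ..., v_n} and root v_1, and every data array z : [0,T1] × [0,T2] → ℝ^d on the integer grid, the corner tree sum equals the total sum of the corner-tree pre-sum: CTS(T, z) = ∑_{r ∈ [0,T1]×[0,T2]} CTPS(T, z)_r. -/
open scoped Classical

/-- The eight cardinal directions. -/
inductive Card : Type where
  | N | NE | E | SE | S | SW | W | NW
  deriving DecidableEq

/-- The predicate on pairs of points of `ℤ²` denoted by a cardinal direction. -/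
def Card.pred : Card → ℤ × ℤ → ℤ × ℤ → Prop
  | .N,  r, s => r.1 = s.1 ∧ r.2 < s.2
  | .NE, r, s => r.1 < s.1 ∧ r.2 < s.2
  | .E,  r, s => r.1 < s.1 ∧ r.2 = s.2
  | .SE, r, s => r.1 < s.1 ∧ r.2 > s.2
  | .S,  r, s => r.1 = s.1 ∧ r.2 > s.2
  | .SW, r, s => r.1 > s.1 ∧ r.2 > s.2
  | .W,  r, s => r.1 > s.1 ∧ r.2 = s.2
  | .NW, r, s => r.1 > s.1 ∧ r.2 < s.2

/-- A corner tree: a finite rooted tree (edges directed away from the root) with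
vertex labels in `F` and edge labels in `L`.  A node carries its vertex label, the
number `k` of children, the labels of the `k` outgoing edges, and the `k` subtrees. -/
inductive CTree (L F : Type) : Type where
  | node (f : F) (k : ℕ) (dir : Fin k → L) (child : Fin k → CTree L F)

namespace CTree

variable {L F G : Type}

/-- The vertex set `V(T)` of a corner tree; `none` is the root, and `some ⟨i, v⟩` is
the vertex `v` of the `i`-th subtree. -/
def Vertex : CTree L F → Type
  | node _ k _ child => Option ((i : Fin k) × Vertex (child i))

/-- The root vertex `v₁` of a corner tree. -/
def rootVertex : (T : CTree L F) → T.Vertex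
  | node _ _ _ _ => none

instance fintypeVertex : (T : CTree L F) → Fintype T.Vertex
  | node _ k _ child =>
    haveI : ∀ i : Fin k, Fintype (Vertex (child i)) := fun i => fintypeVertex (child i)
    inferInstanceAs (Fintype (Option ((i : Fin k) × Vertex (child i))))

/-- `ALLOWED(T, r)`: the conjunction, over all edges `e` of `T`, of the predicate of
the edge label of `e` applied to `(r^(source e), r^(target e))`. -/
def Allowed (pred : L → G → G → Prop) : (T : CTree L F) → (T.Vertex → G) → Prop
  | node _ k dir child, r => ∀ i : Fin k,
      pred (dir i) (r none) (r (some ⟨i, rootVertex (child i)⟩)) ∧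
      Allowed pred (child i) (fun v => r (some ⟨i, v⟩))

end CTree

/-- The integer grid `[0,T₁] × [0,T₂]`. -/
abbrev Grid (T₁ T₂ : ℕ) : Type := Fin (T₁ + 1) × Fin (T₂ + 1)

/-- A grid point, viewed as a point of `ℤ²`. -/
def gridToZ {T₁ T₂ : ℕ} (t : Grid T₁ T₂) : ℤ × ℤ := ((t.1 : ℤ), (t.2 : ℤ))

/-- The product `∏_{i=1}^n 𝔳(vᵢ)(z_{r^i})` of the vertex-label evaluations along an
assignment `r : V(T) → [0,T₁]×[0,T₂]`. -/
noncomputable def vertexProd {d T₁ T₂ : ℕ} (z : Grid T₁ T₂ → Fin d → ℝ) :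
    (T : CTree Card ((Fin d → ℝ) → ℝ)) → (T.Vertex → Grid T₁ T₂) → ℝ
  | .node f k _ child, r =>
      f (z (r none)) * ∏ i : Fin k, vertexProd z (child i) (fun v => r (some ⟨i, v⟩))

/-- The corner tree sum
`CTS(T, z) = ∑_{r : V(T) → [0,T₁]×[0,T₂], ALLOWED(T,r)} ∏ᵢ 𝔳(vᵢ)(z_{r^i})`. -/
noncomputable def CTS {d T₁ T₂ : ℕ} (T : CTree Card ((Fin d → ℝ) → ℝ))
    (z : Grid T₁ T₂ → Fin d → ℝ) : ℝ :=
  ∑ r ∈ Finset.univ.filter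
      (fun r : T.Vertex → Grid T₁ T₂ => CTree.Allowed Card.pred T (fun v => gridToZ (r v))),
    vertexProd z T r

/-- The corner-tree pre-sum `CTPS(T, z)`, defined recursively:
`CTPS(T,z)_t = 𝔳(v₁)(z_t) ⬝ ∏_{e=(v₁,vᵢ)} CUMSUM(𝔢(e), CTPS(T|_{vᵢ}, z))_t`,
where `CUMSUM(X, x)_t = ∑_{r : X(t,r)} x_r`; for a single-vertex tree the product is
empty and `CTPS(T,z)_t = 𝔳(v₁)(z_t)`. -/
noncomputable def CTPS {d T₁ T₂ : ℕ} (z : Grid T₁ T₂ → Fin d → ℝ) :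
    CTree Card ((Fin d → ℝ) → ℝ) → Grid T₁ T₂ → ℝ
  | .node f k dir child, t =>
      f (z t) * ∏ i : Fin k,
        ∑ r ∈ Finset.univ.filter (fun r : Grid T₁ T₂ => Card.pred (dir i) (gridToZ t) (gridToZ r)),
          CTPS z (child i) r

/-!
Unfolding the recursion, `CTPS(T, z)_t` is the total weight of the allowed placements of `T`
whose root sits at `t`: an allowed placement of a node is a root position `t` together with
allowed placements of the subtrees whose roots lie in the prescribed directions from `t`, and
the product over the subtrees of their sums is the sum over such tuples of the products.
Summing over `t` gives `CTS(T, z)`.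
-/

open Finset

namespace CTree

variable {L F α : Type}

def nodeFunEquiv (f : F) (k : ℕ) (dir : Fin k → L) (child : Fin k → CTree L F) :
    ((node f k dir child).Vertex → α) ≃ α × ((i : Fin k) → (child i).Vertex → α) :=
  Equiv.piOptionEquivProd.trans ((Equiv.refl α).prodCongr (Equiv.piCurry fun _ _ => α))

end CTree

section Grid

variable {d T₁ T₂ : ℕ}

noncomputable def allowedPlacements (T : CTree Card ((Fin d → ℝ) → ℝ)) :
    Finset (T.Vertex → Grid T₁ T₂) :=
  univ.filter fun r => CTree.Allowed Card.pred T fun v => gridToZ (r v)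

lemma cts_eq_sum_allowedPlacements (T : CTree Card ((Fin d → ℝ) → ℝ))
    (z : Grid T₁ T₂ → Fin d → ℝ) :
    CTS T z = ∑ r ∈ allowedPlacements T, vertexProd z T r := rfl

lemma sum_allowedPlacements_node_root_eq (z : Grid T₁ T₂ → Fin d → ℝ) (f : (Fin d → ℝ) → ℝ)
    (k : ℕ) (dir : Fin k → Card) (child : Fin k → CTree Card ((Fin d → ℝ) → ℝ))
    (t : Grid T₁ T₂) :
    ∑ r ∈ allowedPlacements (CTree.node f k dir child) with
        r (CTree.node f k dir child).rootVertex = t,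
        vertexProd z (CTree.node f k dir child) r =
      f (z t) * ∏ i, ∑ y ∈ allowedPlacements (child i) with
        Card.pred (dir i) (gridToZ t) (gridToZ (y (child i).rootVertex)),
        vertexProd z (child i) y := by
  calc _ = ∑ p ∈ {t} ×ˢ Fintype.piFinset fun i => {y ∈ allowedPlacements (child i) |
              Card.pred (dir i) (gridToZ t) (gridToZ (y (child i).rootVertex))},
            f (z p.1) * ∏ i, vertexProd z (child i) (p.2 i) :=
        sum_equiv (CTree.nodeFunEquiv f k dir child) (fun r => ?_) (fun _ _ => rfl)
    _ = _ := by rw [sum_product, sum_singleton, prod_univ_sum, mul_sum]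
  simp only [allowedPlacements, mem_filter, mem_univ, true_and, mem_product, mem_singleton,
    Fintype.mem_piFinset]
  change (∀ i, _ ∧ _) ∧ r none = t ↔ r none = t ∧ ∀ i, _ ∧ _
  constructor
  · rintro ⟨h, rfl⟩
    exact ⟨rfl, fun i => (h i).symm⟩
  · rintro ⟨rfl, h⟩
    exact ⟨fun i => (h i).symm, rfl⟩

lemma ctps_eq_sum_allowedPlacements_root_eq (z : Grid T₁ T₂ → Fin d → ℝ)
    (T : CTree Card ((Fin d → ℝ) → ℝ)) (t : Grid T₁ T₂) :
    CTPS z T t = ∑ r ∈ allowedPlacements T with r T.rootVertex = t, vertexProd z T r := by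
  induction T generalizing t with
  | node f k dir child ih =>
    rw [CTPS, sum_allowedPlacements_node_root_eq]
    congr 1
    refine prod_congr rfl fun i _ => ?_
    simp_rw [ih, sum_fiberwise_eq_sum_filter, mem_filter, mem_univ, true_and]

end Grid

/-- For every corner tree `T` and data `z : [0,T₁]×[0,T₂] → ℝ^d`,
the corner tree sum equals the total sum of the corner-tree pre-sum:
`CTS(T, z) = ∑_{r ∈ [0,T₁]×[0,T₂]} CTPS(T, z)_r`. -/
theorem cts_eq_sum_ctps {d T₁ T₂ : ℕ} (T : CTree Card ((Fin d → ℝ) → ℝ))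
    (z : Grid T₁ T₂ → Fin d → ℝ) :
    CTS T z = ∑ t : Grid T₁ T₂, CTPS z T t := by
  rw [cts_eq_sum_allowedPlacements]
  simp_rw [ctps_eq_sum_allowedPlacements_root_eq]
  exact (sum_fiberwise _ _ _).symm
end

section
/- Let (S, ⊕, ⊙, 0_S, 1_S) be a commutative semiring and let T be a corner tree whose vertex labels are functions f : ℝ^d → S. Then for every data array z : [0,T1] × [0,T2] → ℝ^d on the integer grid, the semiring corner tree sum equals the ⊕-total of the semiring corner-tree pre-sum: CTS^S(T, z) = ⊕_{r ∈ [0,T1]×[0,T2]} CTPS^S(T, z)_r. -/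
/-!
Unfolding the recursion, `CTPS^S(T, z)_t` is the sum of the vertex products over the allowed
assignments that put the root at `t`; summing over `t` gives `CTS^S(T, z)`. To make the
induction go through, the root is constrained to an arbitrary predicate `P`: for the `i`-th
subtree `P` is the edge predicate relative to the parent's position. An assignment of a node is
a root position together with independent assignments of the subtrees, so expanding the product
of the children's sums by distributivity yields exactly the sum over assignments of the node.
-/

open scoped Classical

variable {S : Type} [CommSemiring S]

/-- The semiring product `⊙_{i=1}^n 𝔳(vᵢ)(z_{r^i})` of the vertex-label evaluations
along an assignment `r : V(T) → [0,T₁]×[0,T₂]`. -/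
noncomputable def vertexProdS {d T₁ T₂ : ℕ} (z : Grid T₁ T₂ → Fin d → ℝ) :
    (T : CTree Card ((Fin d → ℝ) → S)) → (T.Vertex → Grid T₁ T₂) → S
  | .node f k _ child, r =>
      f (z (r none)) * ∏ i : Fin k, vertexProdS z (child i) (fun v => r (some ⟨i, v⟩))

/-- The semiring corner tree sum
`CTS^S(T, z) = ⊕_{r : V(T) → [0,T₁]×[0,T₂], ALLOWED(T,r)} ⊙ᵢ 𝔳(vᵢ)(z_{r^i})`. -/
noncomputable def CTSS {d T₁ T₂ : ℕ} (T : CTree Card ((Fin d → ℝ) → S))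
    (z : Grid T₁ T₂ → Fin d → ℝ) : S :=
  ∑ r ∈ Finset.univ.filter
      (fun r : T.Vertex → Grid T₁ T₂ => CTree.Allowed Card.pred T (fun v => gridToZ (r v))),
    vertexProdS z T r

/-- The semiring corner-tree pre-sum `CTPS^S(T, z)`, defined recursively:
`CTPS^S(T,z)_t = 𝔳(v₁)(z_t) ⊙ ⊙_{e=(v₁,vᵢ)} CUMSUM^S(𝔢(e), CTPS^S(T|_{vᵢ}, z))_t`,
where `CUMSUM^S(X, x)_t = ⊕_{r : X(t,r)} x_r`; for a single-vertex tree the product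
is empty and `CTPS^S(T,z)_t = 𝔳(v₁)(z_t)`. -/
noncomputable def CTPSS {d T₁ T₂ : ℕ} (z : Grid T₁ T₂ → Fin d → ℝ) :
    CTree Card ((Fin d → ℝ) → S) → Grid T₁ T₂ → S
  | .node f k dir child, t =>
      f (z t) * ∏ i : Fin k,
        ∑ r ∈ Finset.univ.filter (fun r : Grid T₁ T₂ => Card.pred (dir i) (gridToZ t) (gridToZ r)),
          CTPSS z (child i) r

def CTree.nodeAssignmentEquiv {L F G : Type} (f : F) (k : ℕ) (dir : Fin k → L)
    (child : Fin k → CTree L F) :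
    (G × ∀ i, (child i).Vertex → G) ≃ ((CTree.node f k dir child).Vertex → G) :=
  (Equiv.piOptionEquivProd.trans
    (Equiv.prodCongr (Equiv.refl G) (Equiv.piCurry fun _ _ => G))).symm

theorem sum_filter_ctpss_eq_sum_allowed {d T₁ T₂ : ℕ} (z : Grid T₁ T₂ → Fin d → ℝ)
    (T : CTree Card ((Fin d → ℝ) → S)) (P : Grid T₁ T₂ → Prop) :
    ∑ t ∈ Finset.univ.filter P, CTPSS z T t =
      ∑ r ∈ Finset.univ.filter (fun r : T.Vertex → Grid T₁ T₂ =>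
          P (r T.rootVertex) ∧ CTree.Allowed Card.pred T (fun v => gridToZ (r v))),
        vertexProdS z T r := by
  induction T generalizing P with
  | node f k dir child ih =>
    set Q : Grid T₁ T₂ → ∀ i, ((child i).Vertex → Grid T₁ T₂) → Prop := fun t i r =>
      Card.pred (dir i) (gridToZ t) (gridToZ (r (child i).rootVertex)) ∧
        CTree.Allowed Card.pred (child i) (fun v => gridToZ (r v))
    calc ∑ t ∈ Finset.univ.filter P, CTPSS z (.node f k dir child) t
        = ∑ t ∈ Finset.univ.filter P,
            ∑ g ∈ Fintype.piFinset (fun i => Finset.univ.filter (Q t i)),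
              f (z t) * ∏ i, vertexProdS z (child i) (g i) := by
          refine Finset.sum_congr rfl fun t _ => ?_
          simp only [CTPSS, ih, Finset.prod_univ_sum, Finset.mul_sum]
          rfl
      _ = ∑ p ∈ Finset.univ.filter
            (fun p : Grid T₁ T₂ × ∀ i, (child i).Vertex → Grid T₁ T₂ =>
              P p.1 ∧ ∀ i, Q p.1 i (p.2 i)),
              f (z p.1) * ∏ i, vertexProdS z (child i) (p.2 i) :=
          (Finset.sum_finset_product' _ _ _ fun p => by simp).symm
      _ = _ := by
          refine Finset.sum_equiv (CTree.nodeAssignmentEquiv f k dir child) (fun _ => ?_)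
            fun _ _ => rfl
          simp only [Finset.mem_filter, Finset.mem_univ, true_and]
          rfl

/-- Let `S` be a commutative semiring and `T` a corner tree whose
vertex labels are functions `ℝ^d → S`.  Then for every data array
`z : [0,T₁]×[0,T₂] → ℝ^d`, the semiring corner tree sum equals the `⊕`-total of the
semiring corner-tree pre-sum: `CTS^S(T, z) = ⊕_{r ∈ [0,T₁]×[0,T₂]} CTPS^S(T, z)_r`. -/
theorem ctss_eq_sum_ctpss {d T₁ T₂ : ℕ} (T : CTree Card ((Fin d → ℝ) → S))
    (z : Grid T₁ T₂ → Fin d → ℝ) :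
    CTSS T z = ∑ t : Grid T₁ T₂, CTPSS z T t := by
  simpa [CTSS] using (sum_filter_ctpss_eq_sum_allowed z T fun _ => True).symm
end

section
/- Let n ≥ 1 and let π be a permutation of {1, ..., n}. Let T be the corner tree with three vertices: root a with two children b and c, where the edge (a, b) is labeled SE and the edge (a, c) is labeled NW. Then the number of occurrences of T in π equals the number of occurrences of the permutation pattern 321 in π, i.e., the number of triples i < j < k in {1, ..., n} with π(i) > π(j) > π(k). -/
open scoped Classical

/-- The corner tree with three vertices: a root `a` with two children `b` and `c`,
edge `(a, b)` labeled `SE` and edge `(a, c)` labeled `NW`.  (Vertex labels play no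
role for pattern counting, so they are trivial.) -/
def treeSE_NW : CTree Card Unit :=
  CTree.node () 2 ![Card.SE, Card.NW]
    ![CTree.node () 0 ![] ![], CTree.node () 0 ![] ![]]


/-! Reading the occurrence `φ` as the triple `(φ c, φ a, φ b)` is a bijection onto all triples
of indices, and the two edge conditions `a ↘ b`, `a ↖ c` say exactly that `c < a < b` in
position and `π c > π a > π b` in value: an occurrence of `321` with `a` as its middle entry. -/

open CTree

namespace treeSE_NW

def a : treeSE_NW.Vertex := none

def b : treeSE_NW.Vertex := some ⟨0, none⟩

def c : treeSE_NW.Vertex := some ⟨1, none⟩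

theorem vertex_cases (v : treeSE_NW.Vertex) : v = a ∨ v = b ∨ v = c := by
  rcases v with _ | ⟨i, w⟩
  · exact Or.inl rfl
  · fin_cases i <;> rcases w with _ | ⟨j, _⟩
    · exact Or.inr (Or.inl rfl)
    · exact j.elim0
    · exact Or.inr (Or.inr rfl)
    · exact j.elim0

theorem allowed_iff {G : Type} (pred : Card → G → G → Prop) (r : treeSE_NW.Vertex → G) :
    Allowed pred treeSE_NW r ↔ pred .SE (r a) (r b) ∧ pred .NW (r a) (r c) := by
  simp [treeSE_NW, Allowed, Fin.forall_fin_two, rootVertex, a, b, c]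

def labelingEquiv (α : Type) : (treeSE_NW.Vertex → α) ≃ α × α × α where
  toFun φ := (φ c, φ a, φ b)
  invFun t
    | none => t.2.1
    | some ⟨i, _⟩ => if i = 0 then t.2.2 else t.1
  left_inv φ := by
    funext v
    rcases vertex_cases v with rfl | rfl | rfl <;> rfl
  right_inv _ := rfl

end treeSE_NW

section Plot

variable {n m : ℕ} (σ : Fin n → Fin m) (i j : Fin n)

theorem Card.pred_SE_plot :
    Card.pred .SE (((i : ℕ) : ℤ), ((σ i : ℕ) : ℤ)) (((j : ℕ) : ℤ), ((σ j : ℕ) : ℤ)) ↔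
      i < j ∧ σ j < σ i := by
  simp [Card.pred]

theorem Card.pred_NW_plot :
    Card.pred .NW (((i : ℕ) : ℤ), ((σ i : ℕ) : ℤ)) (((j : ℕ) : ℤ), ((σ j : ℕ) : ℤ)) ↔
      j < i ∧ σ i < σ j := by
  simp [Card.pred]

end Plot

theorem cornerTree_counts_321_general (n : ℕ) (π : Equiv.Perm (Fin n)) :
    (Finset.univ.filter
        (fun φ : treeSE_NW.Vertex → Fin n =>
          CTree.Allowed Card.pred treeSE_NW
            (fun v => (((φ v : ℕ) : ℤ), ((π (φ v) : ℕ) : ℤ))))).card =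
    (Finset.univ.filter
        (fun t : Fin n × Fin n × Fin n =>
          t.1 < t.2.1 ∧ t.2.1 < t.2.2 ∧ π t.2.1 < π t.1 ∧ π t.2.2 < π t.2.1)).card := by
  refine Finset.card_equiv (treeSE_NW.labelingEquiv (Fin n)) fun φ => ?_
  simp only [Finset.mem_filter, Finset.mem_univ, true_and, treeSE_NW.allowed_iff,
    Card.pred_SE_plot, Card.pred_NW_plot]
  exact ⟨fun ⟨⟨hab, hπab⟩, hca, hπca⟩ => ⟨hca, hab, hπca, hπab⟩,
    fun ⟨hca, hab, hπca, hπab⟩ => ⟨⟨hab, hπab⟩, hca, hπca⟩⟩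

/-- For `n ≥ 1` and a permutation `π` of `{1, …, n}` (modeled on
`Fin n`, identifying an index `i` with the plot point `(i, π i) ∈ ℤ²`), the number of
occurrences of the corner tree `treeSE_NW` in `π` — maps `φ` from the vertices of the
tree to indices such that every edge predicate holds on the corresponding plot
points — equals the number of occurrences of the pattern `321` in `π`, i.e. the
number of triples `i < j < k` with `π i > π j > π k`. -/
theorem cornerTree_counts_321 (n : ℕ) (hn : 1 ≤ n) (π : Equiv.Perm (Fin n)) :
    (Finset.univ.filter
        (fun φ : treeSE_NW.Vertex → Fin n =>
          CTree.Allowed Card.pred treeSE_NW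
            (fun v => (((φ v : ℕ) : ℤ), ((π (φ v) : ℕ) : ℤ))))).card =
    (Finset.univ.filter
        (fun t : Fin n × Fin n × Fin n =>
          t.1 < t.2.1 ∧ t.2.1 < t.2.2 ∧ π t.2.1 < π t.1 ∧ π t.2.2 < π t.2.1)).card :=
  cornerTree_counts_321_general n π
end

section
/- Let x_1, ..., x_{T-1} be real numbers, k ≥ 1, and α_1, ..., α_k positive integers. For each t define the (k+1)×(k+1) upper unitriangular matrix A_t := I + ∑_{j=1}^k x_t^{α_{k+1-j}} E_{j,j+1}, where E_{j,j+1} is the matrix unit with a 1 in position (j, j+1) and zeros elsewhere. Then the (1, k+1)-entry of the product A_{T-1} ⋯ A_1 equals the iterated sum ∑_{1 ≤ t_1 < t_2 < ⋯ < t_k ≤ T-1} x_{t_1}^{α_1} x_{t_2}^{α_2} ⋯ x_{t_k}^{α_k}. In particular, every iterated sum of this form arises as an entry of a product of input-dependent state-transition matrices of a state-space model. -/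
/-!
Write `P_n = A_n ⋯ A_1`. Since `A_{n+1}` is the identity plus a superdiagonal, row `j` of
`P_{n+1} = A_{n+1} P_n` is row `j` of `P_n` plus `x_{n+1}^α` times row `j + 1` of `P_n`.
The iterated sums `S(m, n)` over increasing `m`-tuples in `{1, …, n}` obey the same recurrence
`S(m+1, n+1) = S(m+1, n) + S(m, n) x_{n+1}^{α_{m+1}}`, obtained by splitting according to whether
the last index is `n + 1`. Induction on `n` then identifies the last column of `P_n`, read from the
bottom up, with `S(0, n), …, S(k, n)`.
-/

open scoped Classical

/-- The `(k+1)×(k+1)` state-transition matrix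
`A_t = I + ∑_{j=1}^k x_t^{α_{k+1-j}} E_{j,j+1}`, where `E_{j,j+1}` is the matrix unit
with a `1` in position `(j, j+1)`.  (With `0`-based indexing, the `1`-based position
`(j, j+1)` for `j = 1, …, k` is `(j.castSucc, j.succ)` for `j : Fin k`, and
`α_{k+1-(j+1)} = α_{k-j}`.) -/
noncomputable def ssmMatrix (k : ℕ) (x : ℕ → ℝ) (α : ℕ → ℕ) (t : ℕ) :
    Matrix (Fin (k + 1)) (Fin (k + 1)) ℝ :=
  1 + ∑ j : Fin k, Matrix.single j.castSucc j.succ (x t ^ α (k - (j : ℕ)))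

theorem Fin.strictMono_snoc {α : Type*} [Preorder α] {m : ℕ} {f : Fin m → α} {a : α}
    (hf : StrictMono f) (ha : ∀ i, f i < a) : StrictMono (Fin.snoc f a : Fin (m + 1) → α) := by
  intro i j hij
  induction j using Fin.lastCases with
  | last =>
    induction i using Fin.lastCases with
    | last => exact absurd hij (lt_irrefl _)
    | cast i => simpa using ha i
  | cast j =>
    induction i using Fin.lastCases with
    | last => exact absurd hij (Fin.le_last _).not_gt
    | cast i => simpa using hf (Fin.castSucc_lt_castSucc_iff.1 hij)

def increasingTuples (m n : ℕ) : Finset (Fin m → ℕ) :=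
  {c ∈ Fintype.piFinset fun _ => Finset.range n | StrictMono c}

theorem mem_increasingTuples {m n : ℕ} {c : Fin m → ℕ} :
    c ∈ increasingTuples m n ↔ StrictMono c ∧ ∀ l, c l < n := by
  simp [increasingTuples, and_comm]

def iteratedSum {R : Type*} [CommSemiring R] (w : ℕ → ℕ → R) (m n : ℕ) : R :=
  ∑ c ∈ increasingTuples m n, ∏ l : Fin m, w l (c l)

section iteratedSum

variable {R : Type*} [CommSemiring R] (w : ℕ → ℕ → R)

theorem iteratedSum_zero_left (n : ℕ) : iteratedSum w 0 n = 1 := by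
  have : increasingTuples 0 n = {Fin.elim0} := by
    ext c
    simp [mem_increasingTuples, Subsingleton.elim c Fin.elim0, Subsingleton.strictMono]
  simp [iteratedSum, this]

theorem iteratedSum_succ_zero (m : ℕ) : iteratedSum w (m + 1) 0 = 0 := by
  have : increasingTuples (m + 1) 0 = ∅ := by
    ext c
    simp [mem_increasingTuples]
  simp [iteratedSum, this]

theorem filter_last_lt_increasingTuples (m n : ℕ) :
    {c ∈ increasingTuples (m + 1) (n + 1) | c (Fin.last m) < n} = increasingTuples (m + 1) n := by
  ext c
  simp only [Finset.mem_filter, mem_increasingTuples]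
  exact ⟨fun ⟨⟨hc, _⟩, hlast⟩ => ⟨hc, fun l => (hc.monotone (Fin.le_last l)).trans_lt hlast⟩,
    fun ⟨hc, hlt⟩ => ⟨⟨hc, fun l => (hlt l).trans n.lt_succ_self⟩, hlt _⟩⟩

theorem iteratedSum_succ_succ (m n : ℕ) :
    iteratedSum w (m + 1) (n + 1) = iteratedSum w (m + 1) n + iteratedSum w m n * w m n := by
  rw [iteratedSum, ← Finset.sum_filter_add_sum_filter_not _ (fun c => c (Fin.last m) < n),
    filter_last_lt_increasingTuples, ← iteratedSum]
  congr 1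
  have hlast : ∀ c ∈ increasingTuples (m + 1) (n + 1), ¬c (Fin.last m) < n ↔ c (Fin.last m) = n :=
    fun c hc => by have := (mem_increasingTuples.1 hc).2 (Fin.last m); omega
  rw [Finset.filter_congr hlast, iteratedSum, Finset.sum_mul]
  refine Finset.sum_nbij' Fin.init (Fin.snoc · n) ?_ ?_ ?_ ?_ ?_
  · intro c hc
    obtain ⟨hc, hlast⟩ := Finset.mem_filter.1 hc
    rw [mem_increasingTuples] at hc
    refine mem_increasingTuples.2 ⟨hc.1.comp Fin.strictMono_castSucc, fun l => ?_⟩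
    exact hlast ▸ hc.1 (Fin.castSucc_lt_last l)
  · intro c hc
    rw [mem_increasingTuples] at hc
    refine Finset.mem_filter.2 ⟨mem_increasingTuples.2 ⟨Fin.strictMono_snoc hc.1 hc.2, ?_⟩, by simp⟩
    intro l
    induction l using Fin.lastCases with
    | last => simp
    | cast l => simpa using (hc.2 l).trans n.lt_succ_self
  · intro c hc
    rw [← (Finset.mem_filter.1 hc).2, Fin.snoc_init_self]
  · intro c _
    exact Fin.init_snoc _ _
  · intro c hc
    rw [Fin.prod_univ_castSucc, (Finset.mem_filter.1 hc).2]
    rfl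

theorem sum_strictMono_fin_eq_iteratedSum (m n : ℕ) :
    ∑ c ∈ Finset.univ.filter (fun c : Fin m → Fin n => StrictMono c), ∏ l : Fin m, w l (c l) =
      iteratedSum w m n := by
  refine Finset.sum_nbij (fun c l => (c l : ℕ)) ?_ ?_ ?_ (fun _ _ => rfl)
  · intro c hc
    rw [Finset.mem_filter] at hc
    exact mem_increasingTuples.2 ⟨fun i j hij => hc.2 hij, fun l => (c l).isLt⟩
  · intro c _ d _ hcd
    funext l
    exact Fin.ext (congrFun hcd l)
  · intro c hc
    rw [Finset.mem_coe, mem_increasingTuples] at hc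
    exact ⟨fun l => ⟨c l, hc.2 l⟩,
      Finset.mem_filter.2 ⟨Finset.mem_univ _, fun i j hij => hc.1 hij⟩, rfl⟩

end iteratedSum

def unitUpperBidiagonal {R : Type*} [Semiring R] {k : ℕ} (d : Fin k → R) :
    Matrix (Fin (k + 1)) (Fin (k + 1)) R :=
  1 + ∑ j : Fin k, Matrix.single j.castSucc j.succ (d j)

section unitUpperBidiagonal

variable {R ι : Type*} [Semiring R] {k : ℕ} (d : Fin k → R) (P : Matrix (Fin (k + 1)) ι R) (c : ι)

theorem unitUpperBidiagonal_mul_apply_castSucc (i : Fin k) :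
    (unitUpperBidiagonal d * P) i.castSucc c = P i.castSucc c + d i * P i.succ c := by
  rw [unitUpperBidiagonal, Matrix.add_mul, Matrix.one_mul, Matrix.add_apply, Matrix.sum_mul,
    Matrix.sum_apply, Finset.sum_eq_single i, Matrix.single_mul_apply_same]
  · exact fun j _ hji => Matrix.single_mul_apply_of_ne _ _ _ _ _
      ((Fin.castSucc_injective _).ne hji.symm) _
  · exact fun h => absurd (Finset.mem_univ i) h

theorem unitUpperBidiagonal_mul_apply_last :
    (unitUpperBidiagonal d * P) (Fin.last k) c = P (Fin.last k) c := by
  rw [unitUpperBidiagonal, Matrix.add_mul, Matrix.one_mul, Matrix.add_apply, Matrix.sum_mul,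
    Matrix.sum_apply, Finset.sum_eq_zero, add_zero]
  exact fun j _ => Matrix.single_mul_apply_of_ne _ _ _ _ _ (Fin.castSucc_lt_last j).ne' _

end unitUpperBidiagonal

noncomputable def ssmProduct (k : ℕ) (x : ℕ → ℝ) (α : ℕ → ℕ) (n : ℕ) :
    Matrix (Fin (k + 1)) (Fin (k + 1)) ℝ :=
  ((List.range n).reverse.map fun t => ssmMatrix k x α (t + 1)).prod

theorem ssmProduct_zero (k : ℕ) (x : ℕ → ℝ) (α : ℕ → ℕ) : ssmProduct k x α 0 = 1 := rfl

theorem ssmProduct_succ (k : ℕ) (x : ℕ → ℝ) (α : ℕ → ℕ) (n : ℕ) :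
    ssmProduct k x α (n + 1) = ssmMatrix k x α (n + 1) * ssmProduct k x α n := by
  simp [ssmProduct, List.range_succ]

theorem ssmProduct_apply_rev_last (k : ℕ) (x : ℕ → ℝ) (α : ℕ → ℕ) (n : ℕ) (i : Fin (k + 1)) :
    ssmProduct k x α n i.rev (Fin.last k) =
      iteratedSum (fun l t => x (t + 1) ^ α (l + 1)) i n := by
  induction n generalizing i with
  | zero =>
    induction i using Fin.cases with
    | zero => simp [ssmProduct_zero, iteratedSum_zero_left]
    | succ j =>
      rw [Fin.rev_succ, ssmProduct_zero, Matrix.one_apply_ne (Fin.castSucc_lt_last _).ne,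
        Fin.val_succ, iteratedSum_succ_zero]
  | succ n ih =>
    have hA : ssmMatrix k x α (n + 1) = unitUpperBidiagonal fun j => x (n + 1) ^ α (k - j) := rfl
    rw [ssmProduct_succ, hA]
    induction i using Fin.cases with
    | zero =>
      have h := ih 0
      rw [Fin.rev_zero, Fin.val_zero, iteratedSum_zero_left] at h
      rw [Fin.rev_zero, unitUpperBidiagonal_mul_apply_last, h, Fin.val_zero, iteratedSum_zero_left]
    | succ j =>
      rw [Fin.rev_succ, unitUpperBidiagonal_mul_apply_castSucc, ← Fin.rev_succ,
        ← Fin.rev_castSucc, ih, ih, Fin.val_succ, Fin.val_castSucc, iteratedSum_succ_succ]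
      have : k - (j.rev : ℕ) = j + 1 := by rw [Fin.val_rev]; omega
      rw [this, mul_comm]

theorem ssm_entry_eq_iterated_sum_general (T k : ℕ) (x : ℕ → ℝ) (α : ℕ → ℕ) :
    (((List.range (T - 1)).reverse.map (fun i => ssmMatrix k x α (i + 1))).prod)
        0 (Fin.last k) =
      ∑ c ∈ Finset.univ.filter (fun c : Fin k → Fin (T - 1) => StrictMono c),
        ∏ l : Fin k, x ((c l : ℕ) + 1) ^ α ((l : ℕ) + 1) := by
  have h := ssmProduct_apply_rev_last k x α (T - 1) (Fin.last k)
  rw [Fin.rev_last, Fin.val_last] at h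
  exact h.trans (sum_strictMono_fin_eq_iteratedSum _ k (T - 1)).symm

/-- Let `x₁, …, x_{T-1}` be real numbers, `k ≥ 1`, and
`α₁, …, α_k` positive integers.  Then the `(1, k+1)`-entry of the product
`A_{T-1} ⋯ A_1` (with `A_{T-1}` leftmost) equals the iterated sum
`∑_{1 ≤ t₁ < ⋯ < t_k ≤ T-1} x_{t₁}^{α₁} ⋯ x_{t_k}^{α_k}`, where a strictly
increasing `k`-tuple in `{1, …, T-1}` is encoded by a strictly monotone map
`c : Fin k → Fin (T-1)` via `t_l = c l + 1`. -/
theorem ssm_entry_eq_iterated_sum (T k : ℕ) (hk : 1 ≤ k) (x : ℕ → ℝ) (α : ℕ → ℕ)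
    (hα : ∀ i, 1 ≤ i → i ≤ k → 0 < α i) :
    (((List.range (T - 1)).reverse.map (fun i => ssmMatrix k x α (i + 1))).prod)
        0 (Fin.last k) =
      ∑ c ∈ Finset.univ.filter (fun c : Fin k → Fin (T - 1) => StrictMono c),
        ∏ l : Fin k, x ((c l : ℕ) + 1) ^ α ((l : ℕ) + 1) :=
  ssm_entry_eq_iterated_sum_general T k x α
end
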